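/- arXiv:1701.00285 — 3 statements merged into one kernel-verified Lean document; each statement's English description precedes it below -/
import Mathlib

section
/- Let ρ > 1, let E_ρ := {(u + u⁻¹)/2 : u ∈ ℂ, 1 ≤ |u| ≤ ρ} be the closed Bernstein ellipse, and let q be holomorphic on an open set containing E_ρ, real-valued on [−1,1], and bounded in modulus by M on E_ρ. Then there exist real coefficients (α_k)_{k≥0} such that q(y) = α₀ + 2·∑_{k=1}^∞ α_k T_k(y) for all y ∈ [−1,1] (with the series converging), and |α_k| ≤ M/ρ^k for every k ≥ 0, where T_k denotes the k-th Chebyshev polynomial of the first kind. -/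
/-- The closed Bernstein ellipse `E_ρ = {(u + u⁻¹)/2 : 1 ≤ |u| ≤ ρ}`. -/
def bernsteinEllipse (ρ : ℝ) : Set ℂ :=
  {z : ℂ | ∃ u : ℂ, 1 ≤ ‖u‖ ∧ ‖u‖ ≤ ρ ∧ z = (u + u⁻¹) / 2}

/-!
The function `θ ↦ q (cos θ)` is continuous, `2π`-periodic and even, so once its Fourier
coefficients are summable its Fourier series is a cosine series, i.e. a Chebyshev series in
`y = cos θ`. Substituting `u = e^{iθ}`, the `n`-th coefficient is
`(2πi)⁻¹ ∮_{|u|=1} u^{-n-1} q((u + u⁻¹)/2) du`. The Joukowski map `u ↦ (u + u⁻¹)/2` sends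
the annulus `1 ≤ |u| ≤ ρ` onto `E_ρ`, so by Cauchy's theorem the contour may be moved to
`|u| = ρ`, where the integral is at most `2π M ρ^{-n}`. The `α_k` are the real parts of the
coefficients.
-/

open Complex Metric
open scoped Real

local instance : Fact (0 < 2 * π) := ⟨Real.two_pi_pos⟩

section FourierCosine

variable {T : ℝ}

theorem Function.Periodic.exists_continuousMap_addCircle {X : Type*} [TopologicalSpace X]
    {g : ℝ → X} (hper : g.Periodic T) (hg : Continuous g) :
    ∃ G : C(AddCircle T, X), ∀ x : ℝ, G x = g x :=
  ⟨⟨hper.lift, continuous_coinduced_dom.mpr hg⟩, fun _ => rfl⟩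

theorem fourierCoeff_neg_of_even [Fact (0 < T)] {f : AddCircle T → ℂ} (hf : ∀ x, f (-x) = f x)
    (n : ℤ) :
    fourierCoeff f (-n) = fourierCoeff f n := by
  rw [fourierCoeff, fourierCoeff, ← MeasureTheory.integral_neg_eq_self]
  congr 1 with t
  rw [hf, neg_neg, fourier_apply, fourier_apply, smul_neg, neg_smul]

theorem fourier_add_fourier_neg (n : ℤ) (x : ℝ) :
    fourier n (x : AddCircle T) + fourier (-n) (x : AddCircle T) =
      2 * Real.cos (2 * π * n * x / T) := by
  rw [fourier_coe_apply, fourier_coe_apply, ofReal_cos, cos, Int.cast_neg]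
  push_cast
  ring_nf

theorem summable_of_even_of_norm_le {c : ℤ → ℂ} (hc : ∀ n, c (-n) = c n) {b : ℕ → ℝ}
    (hb : Summable b) (hcb : ∀ n : ℕ, ‖c n‖ ≤ b n) : Summable c := by
  refine .of_nat_of_neg_add_one (.of_norm_bounded hb hcb)
    (.of_norm_bounded ((summable_nat_add_iff 1).mpr hb) fun n => ?_)
  rw [hc]
  exact_mod_cast hcb (n + 1)

theorem hasSum_cosine_series_of_even [Fact (0 < T)] {f : C(AddCircle T, ℂ)}
    (hf : ∀ x, f (-x) = f x) (hs : Summable (fourierCoeff f)) (x : ℝ) :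
    HasSum (fun k : ℕ => 2 * fourierCoeff f (k + 1) * Real.cos (2 * π * (k + 1) * x / T))
      (f x - fourierCoeff f 0) := by
  have hpairs := (has_pointwise_sum_fourier_series_of_summable hs (x : AddCircle T)).nat_add_neg
  have htail := (hasSum_nat_add_iff' 1).mpr hpairs
  simp only [Finset.range_one, Finset.sum_singleton, Nat.cast_zero, neg_zero] at htail
  rw [fourier_zero, smul_eq_mul, mul_one, add_sub_add_right_eq_sub] at htail
  have hterm (n : ℤ) : fourierCoeff f n • fourier n (x : AddCircle T) +
      fourierCoeff f (-n) • fourier (-n) (x : AddCircle T) =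
        2 * fourierCoeff f n * Real.cos (2 * π * n * x / T) := by
    rw [smul_eq_mul, smul_eq_mul, fourierCoeff_neg_of_even hf, ← mul_add,
      fourier_add_fourier_neg]
    ring
  simp only [hterm] at htail
  exact_mod_cast htail

end FourierCosine

theorem hasSum_re_chebyshev_series_of_even {f : C(AddCircle (2 * π), ℂ)}
    (hf : ∀ x, f (-x) = f x) (hs : Summable (fourierCoeff f)) (θ : ℝ) :
    HasSum (fun k : ℕ =>
        2 * (fourierCoeff f (k + 1)).re *
          (Polynomial.Chebyshev.T ℝ ((k : ℤ) + 1)).eval (Real.cos θ))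
      ((f θ).re - (fourierCoeff f 0).re) := by
  have harg (k : ℕ) : 2 * π * (k + 1) * θ / (2 * π) = (k + 1) * θ := by field_simp
  convert reCLM.hasSum (hasSum_cosine_series_of_even hf hs θ) using 1
  · ext k
    rw [Polynomial.Chebyshev.T_real_cos, harg]
    simp only [reCLM_apply, mul_re, re_ofNat, im_ofNat, ofReal_re, ofReal_im]
    push_cast
    ring
  · rw [reCLM_apply, sub_re]

section BernsteinEllipse

variable {ρ M : ℝ} {q : ℂ → ℂ}

theorem cos_eq_joukowski_exp (θ : ℝ) : cos θ = (exp (θ * I) + (exp (θ * I))⁻¹) / 2 := by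
  rw [← exp_neg, cos, neg_mul]

theorem cos_mem_bernsteinEllipse (hρ : 1 ≤ ρ) (θ : ℝ) : cos θ ∈ bernsteinEllipse ρ :=
  ⟨exp (θ * I), by simp, by simpa using hρ, cos_eq_joukowski_exp θ⟩

theorem circleIntegral_joukowski_eq_of_differentiableAt (hρ : 1 ≤ ρ)
    (hq : ∀ z ∈ bernsteinEllipse ρ, DifferentiableAt ℂ q z) (n : ℤ) :
    (∮ u in C(0, ρ), u ^ n * q ((u + u⁻¹) / 2)) =
      ∮ u in C(0, 1), u ^ n * q ((u + u⁻¹) / 2) := by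
  have hdiff (u : ℂ) (h1 : 1 ≤ ‖u‖) (h2 : ‖u‖ ≤ ρ) :
      DifferentiableAt ℂ (fun u : ℂ => u ^ n * q ((u + u⁻¹) / 2)) u := by
    have hu : u ≠ 0 := norm_pos_iff.mp (one_pos.trans_le h1)
    exact (differentiableAt_zpow.mpr (Or.inl hu)).mul <| (hq _ ⟨u, h1, h2, rfl⟩).comp u <|
      (differentiableAt_id.add (differentiableAt_inv hu)).div_const 2
  refine circleIntegral_eq_of_differentiable_on_annulus_off_countable one_pos hρ
    Set.countable_empty (fun z hz => ?_) fun z hz => ?_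
  · simp only [Set.mem_sdiff, mem_closedBall, mem_ball, dist_zero_right, not_lt] at hz
    exact (hdiff z hz.2 hz.1).continuousAt.continuousWithinAt
  · simp only [Set.sdiff_empty, Set.mem_sdiff, mem_ball, mem_closedBall, dist_zero_right,
      not_le] at hz
    exact hdiff z hz.2.le hz.1.le

theorem norm_circleIntegral_joukowski_le (hρ : 1 ≤ ρ)
    (hbd : ∀ z ∈ bernsteinEllipse ρ, ‖q z‖ ≤ M) (n : ℤ) :
    ‖∮ u in C(0, ρ), u ^ n * q ((u + u⁻¹) / 2)‖ ≤ 2 * π * ρ * (ρ ^ n * M) := by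
  refine circleIntegral.norm_integral_le_of_norm_le_const (by linarith) fun u hu => ?_
  rw [mem_sphere_zero_iff_norm] at hu
  rw [norm_mul, norm_zpow, hu]
  exact mul_le_mul_of_nonneg_left (hbd _ ⟨u, hu ▸ hρ, hu.le, rfl⟩) (by positivity)

theorem fourierCoeff_eq_circleIntegral_joukowski {G : C(AddCircle (2 * π), ℂ)}
    (hG : ∀ θ : ℝ, G θ = q (cos θ)) (n : ℤ) :
    fourierCoeff G n =
      (2 * π * I)⁻¹ * ∮ u in C(0, 1), u ^ (-(n + 1)) * q ((u + u⁻¹) / 2) := by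
  rw [fourierCoeff_eq_intervalIntegral _ n 0, zero_add, circleIntegral,
    ← intervalIntegral.integral_smul, ← intervalIntegral.integral_const_mul]
  refine intervalIntegral.integral_congr fun θ _ => ?_
  have hcirc : circleMap 0 1 θ = exp (θ * I) := by simp [circleMap]
  have hexp : exp (θ * I) * exp (θ * I) ^ (-(n + 1)) =
      exp (2 * π * I * (-n : ℤ) * θ / (2 * π : ℝ)) := by
    have hπ : (π : ℂ) ≠ 0 := ofReal_ne_zero.mpr Real.pi_ne_zero
    rw [← exp_int_mul, ← exp_add]
    push_cast
    field_simp
    congr 1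
    ring
  rw [deriv_circleMap, hcirc, ← cos_eq_joukowski_exp, hG, fourier_coe_apply, ← hexp,
    smul_eq_mul, smul_eq_mul, real_smul]
  push_cast
  field_simp

theorem norm_fourierCoeff_le_of_bernsteinEllipse (hρ : 1 ≤ ρ)
    (hq : ∀ z ∈ bernsteinEllipse ρ, DifferentiableAt ℂ q z)
    (hbd : ∀ z ∈ bernsteinEllipse ρ, ‖q z‖ ≤ M) {G : C(AddCircle (2 * π), ℂ)}
    (hG : ∀ θ : ℝ, G θ = q (cos θ)) (n : ℕ) :
    ‖fourierCoeff G n‖ ≤ M / ρ ^ n := by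
  rw [fourierCoeff_eq_circleIntegral_joukowski hG,
    ← circleIntegral_joukowski_eq_of_differentiableAt hρ hq, norm_mul]
  calc _ ≤ ‖(2 * π * I)⁻¹‖ * (2 * π * ρ * (ρ ^ (-((n : ℤ) + 1)) * M)) := by
        gcongr
        exact norm_circleIntegral_joukowski_le hρ hbd _
    _ = M / ρ ^ n := by
        have hρ0 : ρ ≠ 0 := by positivity
        rw [norm_inv, norm_mul, norm_mul, norm_I, norm_real, Real.norm_of_nonneg (by positivity),
          zpow_neg, ← Int.natCast_succ, zpow_natCast, pow_succ, Complex.norm_two, mul_one]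
        field_simp

end BernsteinEllipse

theorem stmt5_general (ρ M : ℝ) (hρ : 1 < ρ) (q : ℂ → ℂ) (U : Set ℂ)
    (hU : IsOpen U) (hEU : bernsteinEllipse ρ ⊆ U)
    (hq : DifferentiableOn ℂ q U)
    (hbd : ∀ z ∈ bernsteinEllipse ρ, ‖q z‖ ≤ M) :
    ∃ α : ℕ → ℝ,
      (∀ k : ℕ, |α k| ≤ M / ρ ^ k) ∧
      ∀ y : ℝ, y ∈ Set.Icc (-1 : ℝ) 1 →
        HasSum
          (fun k : ℕ =>
            2 * α (k + 1) * (Polynomial.Chebyshev.T ℝ ((k : ℤ) + 1)).eval y)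
          ((q y).re - α 0) := by
  have hqE : ∀ z ∈ bernsteinEllipse ρ, DifferentiableAt ℂ q z :=
    fun z hz => hq.differentiableAt (hU.mem_nhds (hEU hz))
  obtain ⟨G, hG⟩ : ∃ G : C(AddCircle (2 * π), ℂ), ∀ θ : ℝ, G θ = q (cos θ) :=
    Function.Periodic.exists_continuousMap_addCircle (fun θ => by push_cast; rw [cos_add_two_pi])
      (continuous_iff_continuousAt.mpr fun θ =>
        (hqE _ (cos_mem_bernsteinEllipse hρ.le θ)).continuousAt.comp
          (f := fun t : ℝ => cos t) (by fun_prop))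
  have hGeven (x : AddCircle (2 * π)) : G (-x) = G x := by
    induction x using QuotientAddGroup.induction_on with
    | H θ => rw [← QuotientAddGroup.mk_neg, hG, hG, ofReal_neg, cos_neg]
  have hcoeff := norm_fourierCoeff_le_of_bernsteinEllipse hρ.le hqE hbd hG
  have hgeom : Summable fun k : ℕ => M / ρ ^ k := by
    simpa only [div_eq_mul_inv, inv_pow] using
      (summable_geometric_of_lt_one (by positivity) (inv_lt_one_of_one_lt₀ hρ)).mul_left M
  have hsum := summable_of_even_of_norm_le (fourierCoeff_neg_of_even hGeven) hgeom hcoeff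
  refine ⟨fun k => (fourierCoeff G k).re, fun k => (abs_re_le_norm _).trans (hcoeff k),
    fun y hy => ?_⟩
  have h := hasSum_re_chebyshev_series_of_even hGeven hsum (Real.arccos y)
  rwa [hG, ← ofReal_cos, Real.cos_arccos hy.1 hy.2] at h

/-- Chebyshev expansion of an analytic function: if `q` is holomorphic on an open set
containing the closed Bernstein ellipse `E_ρ` (`ρ > 1`), real-valued on `[-1,1]`, and bounded
in modulus by `M` on `E_ρ`, then there are real coefficients `α_k` with
`q(y) = α₀ + 2 ∑_{k≥1} α_k T_k(y)` on `[-1,1]` and `|α_k| ≤ M / ρ^k` for all `k`. -/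
theorem stmt5 (ρ M : ℝ) (hρ : 1 < ρ) (q : ℂ → ℂ) (U : Set ℂ)
    (hU : IsOpen U) (hEU : bernsteinEllipse ρ ⊆ U)
    (hq : DifferentiableOn ℂ q U)
    (hreal : ∀ y : ℝ, y ∈ Set.Icc (-1 : ℝ) 1 → (q y).im = 0)
    (hbd : ∀ z ∈ bernsteinEllipse ρ, ‖q z‖ ≤ M) :
    ∃ α : ℕ → ℝ,
      (∀ k : ℕ, |α k| ≤ M / ρ ^ k) ∧
      ∀ y : ℝ, y ∈ Set.Icc (-1 : ℝ) 1 →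
        HasSum
          (fun k : ℕ =>
            2 * α (k + 1) * (Polynomial.Chebyshev.T ℝ ((k : ℤ) + 1)).eval y)
          ((q y).re - α 0) :=
  stmt5_general ρ M hρ q U hU hEU hq hbd
end

section
/- Let R be a commutative ring, d ≥ 1, and B : {1,…,d} × ℕ → R with B(n, 0) = 0 for all n. Define the difference Δ(n, i) := B(n, i) − B(n, i−1) for i ≥ 1. Let g : (ℕ_{≥1})^d → ℕ be strictly increasing in each argument and let w ∈ ℕ. Then the index set {i ∈ (ℕ_{≥1})^d : g(i) ≤ w} is finite, and ∑_{i : g(i) ≤ w} ∏_{n=1}^d Δ(n, i_n) = ∑_{i : g(i) ≤ w} c(i) · ∏_{n=1}^d B(n, i_n), where c(i) := ∑_{j ∈ {0,1}^d : g(i+j) ≤ w} (−1)^{|j|} and |j| = j_1 + ⋯ + j_d. -/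
/-- The Smolyak combination-technique identity (equation (sparsegrid:eqn1) of the paper),
stated abstractly for commuting univariate operators represented by elements of a commutative
ring: with `B n 0 = 0`, differences `Δ(n,i) = B n i - B n (i-1)`, and `g` strictly increasing
in each argument, the index set `{i ∈ ℕ₊^d : g(i) ≤ w}` is finite and
`∑_{g(i)≤w} ∏_n Δ(n,i_n) = ∑_{g(i)≤w} c(i) ∏_n B(n,i_n)` where
`c(i) = ∑_{j ∈ {0,1}^d, g(i+j) ≤ w} (-1)^{|j|}`. -/
theorem stmt9 {R : Type*} [CommRing R] (d : ℕ) (hd : 1 ≤ d)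
    (B : Fin d → ℕ → R) (hB : ∀ n, B n 0 = 0)
    (g : (Fin d → ℕ) → ℕ)
    (hg : ∀ (i : Fin d → ℕ) (n : Fin d), g i < g (Function.update i n (i n + 1)))
    (w : ℕ) :
    {i : Fin d → ℕ | (∀ n, 1 ≤ i n) ∧ g i ≤ w}.Finite ∧
    ∃ F : Finset (Fin d → ℕ),
      (∀ i : Fin d → ℕ, i ∈ F ↔ ((∀ n, 1 ≤ i n) ∧ g i ≤ w)) ∧
      ∑ i ∈ F, ∏ n, (B n (i n) - B n (i n - 1)) =
        ∑ i ∈ F,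
          (∑ j ∈ Finset.univ.filter
              (fun j : Fin d → Bool =>
                g (fun n => i n + (if j n then 1 else 0)) ≤ w),
            (-1 : ℤ) ^ (∑ n, if j n then 1 else 0)) •
          ∏ n, B n (i n) := by
  classical
  -- Monotonicity of g
  have hmono : ∀ (k i : Fin d → ℕ), g i + ∑ n, k n ≤ g (fun n => i n + k n) := by
    have H : ∀ N (k i : Fin d → ℕ), ∑ n, k n = N → g i + N ≤ g (fun n => i n + k n) := by
      intro N
      induction N with
      | zero =>
        intro k i hk
        have hz : ∀ n, k n = 0 := fun n =>
          (Finset.sum_eq_zero_iff.mp hk) n (Finset.mem_univ n)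
        have : (fun n => i n + k n) = i := funext fun n => by simp [hz n]
        simp [this]
      | succ N ih =>
        intro k i hk
        have hne : ∃ n, k n ≠ 0 := by
          by_contra h
          push_neg at h
          simp [h] at hk
        obtain ⟨n, hn⟩ := hne
        set k' := Function.update k n (k n - 1) with hk'def
        have hsplit : ∑ m, k m = k n + ∑ m ∈ Finset.univ.erase n, k m :=
          (Finset.add_sum_erase _ _ (Finset.mem_univ n)).symm
        have hsum' : ∑ m, k' m = N := by
          rw [hk'def, Finset.sum_update_of_mem (Finset.mem_univ n), ← Finset.erase_eq]
          omega
        have hih := ih k' i hsum'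
        have hstep := hg (fun m => i m + k' m) n
        have heq : Function.update (fun m => i m + k' m) n ((fun m => i m + k' m) n + 1)
            = fun m => i m + k m := by
          funext m
          by_cases hm : m = n
          · subst hm
            simp [hk'def]
            omega
          · simp [Function.update_of_ne hm, hk'def]
        rw [heq] at hstep
        omega
    intro k i; exact H _ k i rfl
  have hbound : ∀ i : Fin d → ℕ, (∀ n, 1 ≤ i n) → g i ≤ w → ∀ n, i n ≤ w + 1 := by
    intro i h1 hw n
    have h := hmono (fun m => i m - 1) (fun _ => 1)
    have heq : (fun m => (1 : ℕ) + (i m - 1)) = i := funext fun m => by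
      have := h1 m; omega
    rw [heq] at h
    have hle : i n - 1 ≤ ∑ m, (i m - 1) :=
      Finset.single_le_sum (f := fun m => i m - 1) (fun _ _ => Nat.zero_le _)
        (Finset.mem_univ n)
    omega
  set F : Finset (Fin d → ℕ) :=
    (Fintype.piFinset fun _ : Fin d => Finset.range (w + 2)).filter
      (fun i => (∀ n, 1 ≤ i n) ∧ g i ≤ w) with hFdef
  have hF : ∀ i : Fin d → ℕ, i ∈ F ↔ ((∀ n, 1 ≤ i n) ∧ g i ≤ w) := by
    intro i
    simp only [hFdef, Finset.mem_filter, Fintype.mem_piFinset, Finset.mem_range]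
    constructor
    · rintro ⟨-, h⟩; exact h
    · intro h
      exact ⟨fun n => by have := hbound i h.1 h.2 n; omega, h⟩
  refine ⟨Set.Finite.ofFinset F (by simpa using hF), F, hF, ?_⟩
  -- expansion of the product of differences
  have expand : ∀ i : Fin d → ℕ,
      ∏ n, (B n (i n) - B n (i n - 1)) =
        ∑ j : Fin d → Bool,
          (-1 : R) ^ (∑ n, if j n then 1 else 0) *
            ∏ n, B n (i n - if j n then 1 else 0) := by
    intro i
    have h1 : ∀ n : Fin d, B n (i n) - B n (i n - 1) =
        ∑ b : Bool, (-1 : R) ^ (if b then 1 else 0) * B n (i n - if b then 1 else 0) := by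
      intro n
      rw [Fintype.sum_bool]
      simp
      ring
    calc ∏ n, (B n (i n) - B n (i n - 1))
        = ∏ n, ∑ b ∈ (Finset.univ : Finset Bool),
            (-1 : R) ^ (if b then 1 else 0) * B n (i n - if b then 1 else 0) := by
          exact Finset.prod_congr rfl fun n _ => h1 n
      _ = ∑ j ∈ Fintype.piFinset (fun _ : Fin d => (Finset.univ : Finset Bool)),
            ∏ n, (-1 : R) ^ (if j n then 1 else 0) * B n (i n - if j n then 1 else 0) :=
          Finset.prod_univ_sum _ _
      _ = ∑ j : Fin d → Bool,
            (-1 : R) ^ (∑ n, if j n then 1 else 0) *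
              ∏ n, B n (i n - if j n then 1 else 0) := by
          rw [Fintype.piFinset_univ]
          refine Finset.sum_congr rfl fun j _ => ?_
          rw [Finset.prod_mul_distrib, Finset.prod_pow_eq_pow_sum]
  -- term functions on pairs
  set f₁ : (Fin d → ℕ) × (Fin d → Bool) → R := fun p =>
    (-1 : R) ^ (∑ n, if p.2 n then 1 else 0) *
      ∏ n, B n (p.1 n - if p.2 n then 1 else 0) with hf₁
  set f₂ : (Fin d → ℕ) × (Fin d → Bool) → R := fun p =>
    ((-1 : ℤ) ^ (∑ n, if p.2 n then 1 else 0)) • ∏ n, B n (p.1 n) with hf₂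
  set T₁ : Finset ((Fin d → ℕ) × (Fin d → Bool)) :=
    (F ×ˢ Finset.univ).filter (fun p => ∀ n, p.2 n = true → 2 ≤ p.1 n) with hT₁
  set T₂ : Finset ((Fin d → ℕ) × (Fin d → Bool)) :=
    (F ×ˢ Finset.univ).filter
      (fun p => g (fun n => p.1 n + if p.2 n then 1 else 0) ≤ w) with hT₂
  have step1 : ∑ i ∈ F, ∏ n, (B n (i n) - B n (i n - 1)) = ∑ p ∈ F ×ˢ Finset.univ, f₁ p := by
    rw [Finset.sum_product]
    exact Finset.sum_congr rfl fun i _ => expand i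
  have step2 : ∑ p ∈ F ×ˢ Finset.univ, f₁ p = ∑ p ∈ T₁, f₁ p := by
    refine (Finset.sum_subset (Finset.filter_subset _ _) ?_).symm
    intro p hp hnp
    rw [Finset.mem_filter] at hnp
    push_neg at hnp
    obtain ⟨n, hjn, hlt⟩ := hnp hp
    rw [Finset.mem_product] at hp
    have h1 : 1 ≤ p.1 n := ((hF p.1).mp hp.1).1 n
    have hzero : p.1 n - (if p.2 n then 1 else 0) = 0 := by
      rw [hjn]; simp; omega
    simp only [hf₁]
    rw [Finset.prod_eq_zero (Finset.mem_univ n) (by rw [hzero]; exact hB n), mul_zero]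
  have step3 : ∑ p ∈ T₁, f₁ p = ∑ p ∈ T₂, f₂ p := by
    refine Finset.sum_nbij' (i := fun p => (fun n => p.1 n - if p.2 n then 1 else 0, p.2))
      (j := fun p => (fun n => p.1 n + if p.2 n then 1 else 0, p.2)) ?_ ?_ ?_ ?_ ?_
    · rintro ⟨i, j⟩ hp
      rw [hT₁, Finset.mem_filter, Finset.mem_product] at hp
      obtain ⟨⟨hp1, -⟩, hp2⟩ := hp
      simp only at hp2
      obtain ⟨hge, hgw⟩ := (hF i).mp hp1
      have hrecomb : (fun n => (i n - if j n then 1 else 0) + if j n then 1 else 0) = i := by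
        funext n
        by_cases hb : j n
        · have := hp2 n hb; simp only [hb, if_true]; omega
        · simp [hb]
      rw [hT₂, Finset.mem_filter, Finset.mem_product]
      dsimp only
      have h := hmono (fun n => if j n then 1 else 0) (fun n => i n - if j n then 1 else 0)
      rw [hrecomb] at h
      refine ⟨⟨(hF _).mpr ⟨?_, by omega⟩, Finset.mem_univ _⟩, by rw [hrecomb]; exact hgw⟩
      intro n
      by_cases hb : j n
      · have := hp2 n hb; simp only [hb, if_true]; omega
      · have := hge n; simp only [hb, if_false, Bool.false_eq_true]; omega
    · rintro ⟨i, j⟩ hp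
      rw [hT₂, Finset.mem_filter, Finset.mem_product] at hp
      obtain ⟨⟨hp1, -⟩, hp2⟩ := hp
      simp only at hp2
      obtain ⟨hge, -⟩ := (hF i).mp hp1
      rw [hT₁, Finset.mem_filter, Finset.mem_product]
      dsimp only
      refine ⟨⟨(hF _).mpr ⟨fun n => le_trans (hge n) (Nat.le_add_right _ _), hp2⟩,
        Finset.mem_univ _⟩, ?_⟩
      intro n hb
      have := hge n
      simp only [hb, if_true]
      omega
    · rintro ⟨i, j⟩ hp
      rw [hT₁, Finset.mem_filter, Finset.mem_product] at hp
      obtain ⟨⟨hp1, -⟩, hp2⟩ := hp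
      simp only at hp2
      have hge := ((hF i).mp hp1).1
      simp only [Prod.mk.injEq]
      refine ⟨funext fun n => ?_, trivial⟩
      by_cases hb : j n
      · have := hp2 n hb; simp only [hb, if_true]; omega
      · simp [hb]
    · rintro ⟨i, j⟩ -
      simp only [Prod.mk.injEq]
      exact ⟨funext fun n => by omega, trivial⟩
    · rintro ⟨i, j⟩ -
      simp only [hf₁, hf₂, zsmul_eq_mul]
      push_cast
      try ring
  have step4 : ∑ p ∈ T₂, f₂ p =
      ∑ i ∈ F,
        (∑ j ∈ Finset.univ.filter
            (fun j : Fin d → Bool =>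
              g (fun n => i n + (if j n then 1 else 0)) ≤ w),
          (-1 : ℤ) ^ (∑ n, if j n then 1 else 0)) • ∏ n, B n (i n) := by
    rw [hT₂, Finset.sum_filter, Finset.sum_product]
    refine Finset.sum_congr rfl fun i _ => ?_
    rw [Finset.sum_smul, Finset.sum_filter]
  rw [step1, step2, step3, step4]
end

section
/- Let Γ be a set, φ : Γ × Γ → ℝ a bounded function, x_1,…,x_N ∈ Γ, and u, v ∈ ℝ^N with ‖u‖₂ = ‖v‖₂ = 1; let n_u and n_v denote the number of nonzero entries of u and v respectively. Let F be a family of functions Γ → ℝ such that ∑_{k=1}^N f(x_k)·u_k = 0 and ∑_{k=1}^N f(x_k)·v_k = 0 for every f ∈ F. Then for every function q : Γ × Γ → ℝ of the form q(x,y) = ∑_{i=1}^r f_i(x)·a_i(y) + ∑_{j=1}^s b_j(x)·g_j(y), where f_1,…,f_r, g_1,…,g_s ∈ F and a_i, b_j : Γ → ℝ are arbitrary, one has |∑_{k=1}^N ∑_{l=1}^N φ(x_k, x_l)·u_k·v_l| ≤ √(n_u · n_v) · sup_{(x,y) ∈ Γ×Γ} |φ(x,y) − q(x,y)|. -/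
open Finset

lemma abs_sum_support_le {N : ℕ} (u : Fin N → ℝ) (hu : ∑ k, u k ^ 2 = 1) :
    ∑ k, |u k| ≤ Real.sqrt ((univ.filter fun k => u k ≠ 0).card : ℝ) := by
  classical
  set t := univ.filter fun k => u k ≠ 0 with ht
  have h1 : ∑ k, |u k| = ∑ k ∈ t, |u k| := by
    rw [ht, Finset.sum_filter_of_ne]
    intro k _ h hk
    simp [hk] at h
  have h2 : (∑ k ∈ t, |u k|) ^ 2 ≤ (t.card : ℝ) * ∑ k ∈ t, |u k| ^ 2 :=
    sq_sum_le_card_mul_sum_sq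
  have h3 : ∑ k ∈ t, |u k| ^ 2 ≤ 1 := by
    calc ∑ k ∈ t, |u k| ^ 2 = ∑ k ∈ t, u k ^ 2 := by simp [sq_abs]
    _ ≤ ∑ k, u k ^ 2 := Finset.sum_le_sum_of_subset_of_nonneg (Finset.subset_univ t)
        (fun i _ _ => sq_nonneg _)
    _ = 1 := hu
  have h4 : (∑ k ∈ t, |u k|) ^ 2 ≤ (t.card : ℝ) := by
    calc (∑ k ∈ t, |u k|) ^ 2 ≤ (t.card : ℝ) * ∑ k ∈ t, |u k| ^ 2 := h2
    _ ≤ (t.card : ℝ) * 1 := mul_le_mul_of_nonneg_left h3 (Nat.cast_nonneg _)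
    _ = (t.card : ℝ) := mul_one _
  rw [h1]
  have hnn : 0 ≤ ∑ k ∈ t, |u k| := Finset.sum_nonneg fun _ _ => abs_nonneg _
  calc ∑ k ∈ t, |u k| = Real.sqrt ((∑ k ∈ t, |u k|) ^ 2) := (Real.sqrt_sq hnn).symm
  _ ≤ Real.sqrt (t.card : ℝ) := Real.sqrt_le_sqrt h4

/-- Core mechanism of the multi-level covariance decay lemmas: if the unit vectors `u, v`
annihilate the evaluation vectors `(f(x₁),…,f(x_N))` of every `f` in a family `F`, then the
kernel bilinear form `∑_k ∑_l φ(x_k, x_l) u_k v_l` is unchanged when `φ` is replaced by the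
residual `φ - q` of any tensor-form approximation `q` whose univariate factors on either side
lie in `F`, and hence is bounded by `√(n_u n_v)` times any sup-norm bound of the residual. -/
theorem stmt10 {Γ : Type*} (φ : Γ → Γ → ℝ) (K : ℝ)
    (hφ : ∀ x' y' : Γ, |φ x' y'| ≤ K)
    {N : ℕ} (x : Fin N → Γ) (u v : Fin N → ℝ)
    (hu : ∑ k, u k ^ 2 = 1) (hv : ∑ k, v k ^ 2 = 1)
    (F : Set (Γ → ℝ))
    (hFu : ∀ f ∈ F, ∑ k, f (x k) * u k = 0)
    (hFv : ∀ f ∈ F, ∑ k, f (x k) * v k = 0)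
    (r s : ℕ) (f : Fin r → Γ → ℝ) (a : Fin r → Γ → ℝ)
    (b : Fin s → Γ → ℝ) (g : Fin s → Γ → ℝ)
    (hf : ∀ i, f i ∈ F) (hg : ∀ j, g j ∈ F)
    (q : Γ → Γ → ℝ)
    (hq : ∀ x' y' : Γ, q x' y' = ∑ i, f i x' * a i y' + ∑ j, b j x' * g j y')
    (Mr : ℝ) (hMr : ∀ x' y' : Γ, |φ x' y' - q x' y'| ≤ Mr) :
    |∑ k, ∑ l, φ (x k) (x l) * u k * v l| ≤
      Real.sqrt
        (((univ.filter fun k => u k ≠ 0).card : ℝ) *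
          ((univ.filter fun k => v k ≠ 0).card : ℝ)) * Mr := by
  classical
  rcases Nat.eq_zero_or_pos N with hN | hN
  · subst hN
    simp
  have hΓ : Nonempty Γ := ⟨x ⟨0, hN⟩⟩
  have hMr0 : 0 ≤ Mr :=
    le_trans (abs_nonneg _) (hMr (Classical.arbitrary Γ) (Classical.arbitrary Γ))
  -- q-part vanishes
  have expand : ∑ i, (∑ k, f i (x k) * u k) * (∑ l, a i (x l) * v l)
      + ∑ j, (∑ k, b j (x k) * u k) * (∑ l, g j (x l) * v l)
      = ∑ k, ∑ l, q (x k) (x l) * u k * v l := by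
    simp_rw [Finset.sum_mul_sum]
    rw [Finset.sum_comm (f := fun i k => ∑ l, (f i (x k) * u k) * (a i (x l) * v l)),
        Finset.sum_comm (f := fun j k => ∑ l, (b j (x k) * u k) * (g j (x l) * v l)),
        ← Finset.sum_add_distrib]
    refine Finset.sum_congr rfl fun k _ => ?_
    rw [Finset.sum_comm (f := fun i l => (f i (x k) * u k) * (a i (x l) * v l)),
        Finset.sum_comm (f := fun j l => (b j (x k) * u k) * (g j (x l) * v l)),
        ← Finset.sum_add_distrib]
    refine Finset.sum_congr rfl fun l _ => ?_
    rw [hq, add_mul, add_mul, Finset.sum_mul, Finset.sum_mul, Finset.sum_mul, Finset.sum_mul]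
    congr 1
    · refine Finset.sum_congr rfl fun i _ => ?_
      ring
    · refine Finset.sum_congr rfl fun j _ => ?_
      ring
  have hq0 : ∑ k, ∑ l, q (x k) (x l) * u k * v l = 0 := by
    rw [← expand]
    have h1 : ∀ i : Fin r, (∑ k, f i (x k) * u k) = 0 := fun i => hFu _ (hf i)
    have h2 : ∀ j : Fin s, (∑ l, g j (x l) * v l) = 0 := fun j => hFv _ (hg j)
    simp [h1, h2]
  have key : ∑ k, ∑ l, φ (x k) (x l) * u k * v l
      = ∑ k, ∑ l, (φ (x k) (x l) - q (x k) (x l)) * u k * v l := by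
    simp_rw [sub_mul, Finset.sum_sub_distrib]
    rw [hq0, sub_zero]
  rw [key]
  have hbound : |∑ k, ∑ l, (φ (x k) (x l) - q (x k) (x l)) * u k * v l|
      ≤ (∑ k, |u k|) * (∑ l, |v l|) * Mr := by
    calc |∑ k, ∑ l, (φ (x k) (x l) - q (x k) (x l)) * u k * v l|
        ≤ ∑ k, |∑ l, (φ (x k) (x l) - q (x k) (x l)) * u k * v l| :=
          Finset.abs_sum_le_sum_abs _ _
      _ ≤ ∑ k, ∑ l, |(φ (x k) (x l) - q (x k) (x l)) * u k * v l| :=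
          Finset.sum_le_sum fun k _ => Finset.abs_sum_le_sum_abs _ _
      _ ≤ ∑ k, ∑ l, |u k| * |v l| * Mr := by
          apply Finset.sum_le_sum; intro k _
          apply Finset.sum_le_sum; intro l _
          rw [abs_mul, abs_mul]
          calc |φ (x k) (x l) - q (x k) (x l)| * |u k| * |v l|
              ≤ Mr * |u k| * |v l| := by
                apply mul_le_mul_of_nonneg_right _ (abs_nonneg _)
                exact mul_le_mul_of_nonneg_right (hMr _ _) (abs_nonneg _)
            _ = |u k| * |v l| * Mr := by ring
      _ = (∑ k, |u k|) * (∑ l, |v l|) * Mr := by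
          rw [Finset.sum_mul_sum univ univ (fun k => |u k|) (fun l => |v l|), Finset.sum_mul]
          refine Finset.sum_congr rfl fun k _ => ?_
          rw [Finset.sum_mul]
  refine hbound.trans ?_
  apply mul_le_mul_of_nonneg_right _ hMr0
  rw [Real.sqrt_mul (Nat.cast_nonneg _)]
  exact mul_le_mul (abs_sum_support_le u hu) (abs_sum_support_le v hv)
    (Finset.sum_nonneg fun _ _ => abs_nonneg _) (Real.sqrt_nonneg _)
end
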